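/- arXiv:1903.09556 — 5 statements merged into one kernel-verified Lean document; each statement's English description precedes it below -/
import Mathlib

section
/- Let n₁ ≥ 2 and n₂ ≥ 1 be integers, μ ∈ ℝ, a > 0, and b_{j,i} > 0 for j = 1,…,n₂ and i = 2,…,n₁, and set n = (n₁−1)n₂ + 1. Then the integral over ℝⁿ of the Hybrid Rosenbrock kernel equals π^{n/2} / (√a · ∏_{j=1}^{n₂} ∏_{i=2}^{n₁} √(b_{j,i})); equivalently, the normalizing constant of the kernel is √a · ∏_{j,i} √(b_{j,i}) / π^{n/2}. -/
/-!
The substitution `y_{j,i} = x_{j,i} - x_{j,i-1}²` is triangular with unit diagonal, hence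
preserves Lebesgue measure: along each chain it is an iterated skew product of translations.
It turns the kernel into `exp (-a (x₁ - μ)²) ∏_{j,i} exp (-b_{j,i} y_{j,i}²)`, a product of
one-dimensional Gaussians, whose integral is `√(π / a) ∏_{j,i} √(π / b_{j,i})`.
-/

open MeasureTheory Real

/-- The Hybrid Rosenbrock kernel with block parameters `n₁, n₂`, location `μ`,
precision `a` for `x₁`, and precisions `b j k` for the variable `x_{j,i}` with
`i = k + 2`.  A state is a pair `(x₁, xs)` where `xs j k` is the coordinate
`x_{j, k+2}` (for `j = 1,…,n₂` and `i = 2,…,n₁`), and by convention the variable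
preceding `x_{j,2}` is `x₁`. -/
noncomputable def hybridRosenbrockKernel (n₁ n₂ : ℕ) (μ a : ℝ)
    (b : Fin n₂ → Fin (n₁ - 1) → ℝ)
    (x₁ : ℝ) (xs : Fin n₂ → Fin (n₁ - 1) → ℝ) : ℝ :=
  Real.exp (-a * (x₁ - μ) ^ 2 -
    ∑ j : Fin n₂, ∑ k : Fin (n₁ - 1),
      b j k * (xs j k -
        (if hk : k.val = 0 then x₁
         else xs j ⟨k.val - 1, by have := k.isLt; omega⟩) ^ 2) ^ 2)

lemma measurePreserving_finCons {α : Type*} [MeasureSpace α] [SigmaFinite (volume : Measure α)]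
    {m : ℕ} : MeasurePreserving fun p : α × (Fin m → α) => (Fin.cons p.1 p.2 : Fin (m + 1) → α) := by
  convert (volume_preserving_piFinSuccAbove (fun _ : Fin (m + 1) => α) 0).symm using 1
  ext p : 1
  simp only [MeasurableEquiv.piFinSuccAbove_symm_apply, Fin.insertNthEquiv_zero]
  rfl

lemma dite_eq_cons_castSucc {α : Type*} {m : ℕ} (v : α) (x : Fin m → α) (k : Fin m) :
    (if _ : k.val = 0 then v else x ⟨k.val - 1, by have := k.isLt; omega⟩) =
      (Fin.cons v x : Fin (m + 1) → α) k.castSucc := by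
  rcases k with ⟨_ | k, hk⟩
  · rfl
  · exact (Fin.cons_succ (α := fun _ => α) v x ⟨k, Nat.lt_of_succ_lt hk⟩).symm

section ChainShear

variable {m : ℕ} {φ : ℝ → ℝ}

/-- The shear `x_k ↦ x_k - φ (x_{k-1})` along a chain, where `x_{-1} = v`. -/
noncomputable def chainShear (φ : ℝ → ℝ) (v : ℝ) (x : Fin m → ℝ) : Fin m → ℝ :=
  fun k => x k - φ ((Fin.cons v x : Fin (m + 1) → ℝ) k.castSucc)

lemma chainShear_cons (v y : ℝ) (x : Fin m → ℝ) :
    chainShear φ v (Fin.cons y x) = Fin.cons (y - φ v) (chainShear φ y x) := by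
  ext k
  refine Fin.cases ?_ (fun k => ?_) k <;> simp [chainShear]

lemma measurable_chainShear (hφ : Measurable φ) :
    Measurable fun p : ℝ × (Fin m → ℝ) => chainShear φ p.1 p.2 := by
  have := (measurePreserving_finCons (α := ℝ) (m := m)).measurable
  unfold chainShear
  fun_prop

lemma measurePreserving_chainShear (hφ : Measurable φ) (v : ℝ) :
    MeasurePreserving (chainShear (m := m) φ v) := by
  induction m generalizing v with
  | zero =>
    have : chainShear φ v = id := funext fun x => funext fun k => k.elim0
    exact this ▸ MeasurePreserving.id volume
  | succ m ih =>
    have hskew : MeasurePreserving fun p : ℝ × (Fin m → ℝ) =>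
        (p.1 - φ v, chainShear φ p.1 p.2) :=
      (measurePreserving_sub_right volume (φ v)).skew_product (measurable_chainShear hφ)
        (ae_of_all _ fun y => (ih y).map_eq)
    convert measurePreserving_finCons.comp
      (hskew.comp (volume_preserving_piFinSuccAbove (fun _ : Fin (m + 1) => ℝ) 0)) using 1
    ext x : 1
    show chainShear φ v x = Fin.cons (x 0 - φ v) (chainShear φ (x 0) (Fin.tail x))
    rw [← chainShear_cons, Fin.cons_self_tail]

lemma measurePreserving_prod_pi_chainShear {ι : Type*} [Fintype ι] (hφ : Measurable φ) :
    MeasurePreserving fun p : ℝ × (ι → Fin m → ℝ) => (p.1, fun j => chainShear φ p.1 (p.2 j)) :=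
  (MeasurePreserving.id volume).skew_product
    (measurable_pi_lambda _ fun j => (measurable_chainShear hφ).comp
      (measurable_fst.prodMk ((measurable_pi_apply j).comp measurable_snd)))
    (ae_of_all _ fun v => (volume_preserving_pi fun _ => measurePreserving_chainShear hφ v).map_eq)

end ChainShear

lemma integral_exp_neg_mul_sub_sq (a μ : ℝ) : ∫ x : ℝ, exp (-a * (x - μ) ^ 2) = √(π / a) := by
  rw [integral_sub_right_eq_self (fun x => exp (-a * x ^ 2)) μ, integral_gaussian]

lemma integral_prod_exp_neg_mul_sq {κ : Type*} [Fintype κ] (b : κ → ℝ) :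
    ∫ y : κ → ℝ, ∏ k, exp (-b k * y k ^ 2) = ∏ k, √(π / b k) := by
  rw [integral_fintype_prod_volume_eq_prod (fun k t => exp (-b k * t ^ 2))]
  simp_rw [integral_gaussian]

lemma integral_gaussian_mul_prod_gaussian {ι κ : Type*} [Fintype ι] [Fintype κ] (μ a : ℝ)
    (b : ι → κ → ℝ) :
    ∫ p : ℝ × (ι → κ → ℝ), exp (-a * (p.1 - μ) ^ 2) * ∏ j, ∏ k, exp (-b j k * p.2 j k ^ 2) =
      √(π / a) * ∏ j, ∏ k, √(π / b j k) := by
  rw [Measure.volume_eq_prod, integral_prod_mul (fun x => exp (-a * (x - μ) ^ 2))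
      (fun y : ι → κ → ℝ => ∏ j, ∏ k, exp (-b j k * y j k ^ 2)), integral_exp_neg_mul_sub_sq,
    integral_fintype_prod_volume_eq_prod (fun j (y : κ → ℝ) => ∏ k, exp (-b j k * y k ^ 2))]
  simp_rw [integral_prod_exp_neg_mul_sq]

lemma sqrt_pi_div_mul_prod_prod_sqrt_pi_div {ι κ : Type*} [Fintype ι] [Fintype κ] (a : ℝ)
    (b : ι → κ → ℝ) :
    √(π / a) * ∏ j, ∏ k, √(π / b j k) =
      π ^ (((Fintype.card κ * Fintype.card ι + 1 : ℕ) : ℝ) / 2) / (√a * ∏ j, ∏ k, √(b j k)) := by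
  simp_rw [sqrt_div pi_nonneg, Finset.prod_div_distrib, Finset.prod_const, Finset.card_univ,
    div_mul_div_comm, ← pow_mul, ← pow_succ', sqrt_eq_rpow, ← rpow_natCast, ← rpow_mul pi_nonneg]
  push_cast
  ring_nf

lemma hybridRosenbrockKernel_eq (n₁ n₂ : ℕ) (μ a : ℝ) (b : Fin n₂ → Fin (n₁ - 1) → ℝ)
    (x₁ : ℝ) (xs : Fin n₂ → Fin (n₁ - 1) → ℝ) :
    hybridRosenbrockKernel n₁ n₂ μ a b x₁ xs =
      exp (-a * (x₁ - μ) ^ 2) * ∏ j, ∏ k, exp (-b j k * chainShear (· ^ 2) x₁ (xs j) k ^ 2) := by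
  simp_rw [hybridRosenbrockKernel, sub_eq_add_neg _ (Finset.sum _ _), exp_add,
    ← Finset.sum_neg_distrib, exp_sum, chainShear, neg_mul, dite_eq_cons_castSucc]

theorem hybridRosenbrock_normalizing_constant_general (n₁ n₂ : ℕ)
    (μ a : ℝ)
    (b : Fin n₂ → Fin (n₁ - 1) → ℝ) :
    (∫ p : ℝ × (Fin n₂ → Fin (n₁ - 1) → ℝ),
        hybridRosenbrockKernel n₁ n₂ μ a b p.1 p.2)
      = π ^ ((((n₁ - 1) * n₂ + 1 : ℕ) : ℝ) / 2) /
          (Real.sqrt a * ∏ j : Fin n₂, ∏ k : Fin (n₁ - 1), Real.sqrt (b j k)) := by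
  have hshear := measurePreserving_prod_pi_chainShear (ι := Fin n₂) (m := n₁ - 1)
    (continuous_pow 2).measurable
  have hgauss : Continuous fun q : ℝ × (Fin n₂ → Fin (n₁ - 1) → ℝ) =>
      exp (-a * (q.1 - μ) ^ 2) * ∏ j, ∏ k, exp (-b j k * q.2 j k ^ 2) := by fun_prop
  have hchange := integral_map hshear.aemeasurable hgauss.aestronglyMeasurable
  rw [hshear.map_eq] at hchange
  simp_rw [hybridRosenbrockKernel_eq]
  rw [← hchange, integral_gaussian_mul_prod_gaussian, sqrt_pi_div_mul_prod_prod_sqrt_pi_div]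
  simp only [Fintype.card_fin]

/-- The integral over `ℝⁿ`, `n = (n₁-1) n₂ + 1`, of the Hybrid Rosenbrock kernel is
`π^{n/2} / (√a ∏_{j,i} √(b_{j,i}))`; equivalently its normalizing constant is
`√a ∏_{j,i} √(b_{j,i}) / π^{n/2}`. -/
theorem hybridRosenbrock_normalizing_constant (n₁ n₂ : ℕ)
    (h₁ : 2 ≤ n₁) (h₂ : 1 ≤ n₂) (μ a : ℝ) (ha : 0 < a)
    (b : Fin n₂ → Fin (n₁ - 1) → ℝ) (hb : ∀ j k, 0 < b j k) :
    (∫ p : ℝ × (Fin n₂ → Fin (n₁ - 1) → ℝ),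
        hybridRosenbrockKernel n₁ n₂ μ a b p.1 p.2)
      = π ^ ((((n₁ - 1) * n₂ + 1 : ℕ) : ℝ) / 2) /
          (Real.sqrt a * ∏ j : Fin n₂, ∏ k : Fin (n₁ - 1), Real.sqrt (b j k)) :=
  hybridRosenbrock_normalizing_constant_general n₁ n₂ μ a b
end

section
/- For all a, b, c, d > 0, μ₁, μ₂ ∈ ℝ and every fixed x₁ ∈ ℝ, the conditional density of x₂ given x₁ under the 3-dimensional Full Rosenbrock kernel after marginalizing x₃ is Gaussian with mean (b x₁² + c μ₂)/(b+c) and variance 1/(2(b+c)): the function x₂ ↦ ∫_ℝ exp(−a(x₁−μ₁)² − b(x₂−x₁²)² − c(x₂−μ₂)² − d(x₃−x₂²)²) dx₃, once divided by its integral over x₂ ∈ ℝ, equals √((b+c)/π) · exp(−(b+c)(x₂ − (b x₁² + c μ₂)/(b+c))²). -/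
open MeasureTheory Real

lemma gauss_shift (k m : ℝ) :
    (∫ x : ℝ, Real.exp (-k * (x - m) ^ 2)) = Real.sqrt (π / k) := by
  rw [← integral_gaussian k]
  exact integral_sub_right_eq_self (fun x => Real.exp (-k * x ^ 2)) m

/-- Under the 3-d Full Rosenbrock kernel, after marginalizing `x₃`, the conditional
density of `x₂` given `x₁` is Gaussian with mean `(b x₁² + c μ₂)/(b + c)` and
variance `1/(2(b + c))`. -/
theorem fullRosenbrock3d_conditional_x2 (a b c d μ₁ μ₂ : ℝ)
    (ha : 0 < a) (hb : 0 < b) (hc : 0 < c) (hd : 0 < d) (x₁ x₂ : ℝ) :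
    (∫ x₃ : ℝ,
        Real.exp (-a * (x₁ - μ₁) ^ 2 - b * (x₂ - x₁ ^ 2) ^ 2
          - c * (x₂ - μ₂) ^ 2 - d * (x₃ - x₂ ^ 2) ^ 2)) /
      (∫ y : ℝ, ∫ x₃ : ℝ,
        Real.exp (-a * (x₁ - μ₁) ^ 2 - b * (y - x₁ ^ 2) ^ 2
          - c * (y - μ₂) ^ 2 - d * (x₃ - y ^ 2) ^ 2))
      = Real.sqrt ((b + c) / π) *
          Real.exp (-(b + c) * (x₂ - (b * x₁ ^ 2 + c * μ₂) / (b + c)) ^ 2) := by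
  have hbc : (0:ℝ) < b + c := by linarith
  have hbc' : b + c ≠ 0 := ne_of_gt hbc
  set m := (b * x₁ ^ 2 + c * μ₂) / (b + c) with hm
  set K := b * c / (b + c) * (x₁ ^ 2 - μ₂) ^ 2 with hK
  -- complete the square
  have hsq : ∀ y : ℝ, -b * (y - x₁ ^ 2) ^ 2 - c * (y - μ₂) ^ 2
      = -(b + c) * (y - m) ^ 2 - K := by
    intro y
    rw [hm, hK]
    field_simp
    ring
  -- inner integral over x₃
  have key : ∀ u : ℝ, (∫ x₃ : ℝ,
      Real.exp (-a * (x₁ - μ₁) ^ 2 - b * (u - x₁ ^ 2) ^ 2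
        - c * (u - μ₂) ^ 2 - d * (x₃ - u ^ 2) ^ 2))
      = Real.exp (-a * (x₁ - μ₁) ^ 2 - K) * Real.exp (-(b + c) * (u - m) ^ 2)
        * Real.sqrt (π / d) := by
    intro u
    have h1 : ∀ x₃ : ℝ, Real.exp (-a * (x₁ - μ₁) ^ 2 - b * (u - x₁ ^ 2) ^ 2
        - c * (u - μ₂) ^ 2 - d * (x₃ - u ^ 2) ^ 2)
        = (Real.exp (-a * (x₁ - μ₁) ^ 2 - K) * Real.exp (-(b + c) * (u - m) ^ 2))
          * Real.exp (-d * (x₃ - u ^ 2) ^ 2) := by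
      intro x₃
      rw [← Real.exp_add, ← Real.exp_add]
      congr 1
      have := hsq u
      linarith
    simp_rw [h1]
    rw [integral_const_mul, gauss_shift]
  simp_rw [key]
  rw [integral_mul_const, integral_const_mul, gauss_shift]
  have hexp : Real.exp (-a * (x₁ - μ₁) ^ 2 - K) ≠ 0 := Real.exp_ne_zero _
  have hπd : Real.sqrt (π / d) ≠ 0 := by
    positivity
  have hπbc : (0:ℝ) < Real.sqrt (π / (b + c)) := by positivity
  rw [show Real.exp (-a * (x₁ - μ₁) ^ 2 - K) * Real.exp (-(b + c) * (x₂ - m) ^ 2)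
        * Real.sqrt (π / d)
      = (Real.exp (-(b + c) * (x₂ - m) ^ 2))
        * (Real.exp (-a * (x₁ - μ₁) ^ 2 - K) * Real.sqrt (π / d)) by ring,
     show Real.exp (-a * (x₁ - μ₁) ^ 2 - K) * Real.sqrt (π / (b + c))
        * Real.sqrt (π / d)
      = Real.sqrt (π / (b + c))
        * (Real.exp (-a * (x₁ - μ₁) ^ 2 - K) * Real.sqrt (π / d)) by ring]
  rw [mul_div_mul_right _ _ (by positivity)]
  rw [div_eq_iff (ne_of_gt hπbc)]
  have h1 : Real.sqrt ((b + c) / π) * Real.sqrt (π / (b + c)) = 1 := by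
    rw [← Real.sqrt_mul (by positivity),
      show (b + c) / π * (π / (b + c)) = 1 by field_simp, Real.sqrt_one]
  linear_combination (-(Real.exp (-(b + c) * (x₂ - m) ^ 2))) * h1
end

section
/- Let n₁ ≥ 2, n₂ ≥ 1, μ ∈ ℝ, a > 0, b_{j,i} > 0 for j = 1,…,n₂ and i = 2,…,n₁, and n = (n₁−1)n₂+1. Then the normalized Hybrid Rosenbrock density factorizes as a product of Gaussian densities: for every point of ℝⁿ, (√a · ∏_{j,i} √(b_{j,i}) / π^{n/2}) · exp(−a(x₁−μ)² − Σ_{j=1}^{n₂} Σ_{i=2}^{n₁} b_{j,i}(x_{j,i}−x_{j,i−1}²)²) = g_{μ, 1/(2a)}(x₁) · ∏_{j=1}^{n₂} ∏_{i=2}^{n₁} g_{x_{j,i−1}², 1/(2 b_{j,i})}(x_{j,i}), where g_{m,σ²}(x) = (1/√(2πσ²)) exp(−(x−m)²/(2σ²)) and x_{j,1} = x₁ for every j. (This identity is the correctness of the sequential sampling scheme of Algorithm 1.) -/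
open MeasureTheory Real

/-- The Gaussian probability density with mean `m` and variance `v`. -/
noncomputable def gaussDensity (m v x : ℝ) : ℝ :=
  (1 / Real.sqrt (2 * π * v)) * Real.exp (-(x - m) ^ 2 / (2 * v))

lemma gaussDensity_eq (m c x : ℝ) (hc : 0 < c) :
    gaussDensity m (1 / (2 * c)) x = (Real.sqrt c / Real.sqrt π) * Real.exp (-(c * (x - m) ^ 2)) := by
  unfold gaussDensity
  have h1 : 2 * π * (1 / (2 * c)) = π / c := by field_simp
  have h2 : -(x - m) ^ 2 / (2 * (1 / (2 * c))) = -(c * (x - m) ^ 2) := by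
    field_simp
  rw [h1, h2, Real.sqrt_div pi_pos.le, one_div_div]

/-- The normalized Hybrid Rosenbrock density factorizes, at every point of `ℝⁿ` with
`n = (n₁-1) n₂ + 1`, as the product of the Gaussian density `g_{μ, 1/(2a)}` in `x₁`
and the conditional Gaussian densities `g_{x_{j,i-1}², 1/(2 b_{j,i})}` in `x_{j,i}`
(`x_{j,1} = x₁`): this is the correctness of the sequential sampling scheme. -/
theorem hybridRosenbrock_factorization (n₁ n₂ : ℕ)
    (h₁ : 2 ≤ n₁) (h₂ : 1 ≤ n₂) (μ a : ℝ) (ha : 0 < a)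
    (b : Fin n₂ → Fin (n₁ - 1) → ℝ) (hb : ∀ j k, 0 < b j k)
    (x₁ : ℝ) (xs : Fin n₂ → Fin (n₁ - 1) → ℝ) :
    (Real.sqrt a * (∏ j : Fin n₂, ∏ k : Fin (n₁ - 1), Real.sqrt (b j k)) /
        π ^ ((((n₁ - 1) * n₂ + 1 : ℕ) : ℝ) / 2)) *
      hybridRosenbrockKernel n₁ n₂ μ a b x₁ xs
      = gaussDensity μ (1 / (2 * a)) x₁ *
          ∏ j : Fin n₂, ∏ k : Fin (n₁ - 1),
            gaussDensity
              ((if hk : k.val = 0 then x₁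
                else xs j ⟨k.val - 1, by have := k.isLt; omega⟩) ^ 2)
              (1 / (2 * b j k)) (xs j k) := by
  have hpi : (π : ℝ) ^ ((((n₁ - 1) * n₂ + 1 : ℕ) : ℝ) / 2)
      = Real.sqrt π * Real.sqrt π ^ ((n₁ - 1) * n₂) := by
    rw [Real.sqrt_eq_rpow, ← Real.rpow_natCast ((π : ℝ) ^ ((1:ℝ)/2)) ((n₁-1)*n₂),
      ← Real.rpow_mul pi_pos.le, ← Real.rpow_add pi_pos]
    congr 1; push_cast; ring
  rw [gaussDensity_eq μ a x₁ ha]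
  have key : ∀ (j : Fin n₂) (k : Fin (n₁ - 1)),
      gaussDensity ((if hk : k.val = 0 then x₁
          else xs j ⟨k.val - 1, by have := k.isLt; omega⟩) ^ 2)
        (1 / (2 * b j k)) (xs j k)
      = (Real.sqrt (b j k) / Real.sqrt π) *
          Real.exp (-(b j k * (xs j k - (if hk : k.val = 0 then x₁
            else xs j ⟨k.val - 1, by have := k.isLt; omega⟩) ^ 2) ^ 2)) :=
    fun j k => gaussDensity_eq _ (b j k) (xs j k) (hb j k)
  simp_rw [key]
  unfold hybridRosenbrockKernel
  rw [hpi]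
  simp_rw [div_eq_mul_inv, Finset.prod_mul_distrib, ← Real.exp_sum,
    Finset.prod_const, Finset.card_univ, Fintype.card_fin, ← pow_mul]
  rw [sub_eq_add_neg, Real.exp_add]
  have hπ : Real.sqrt π ≠ 0 := (Real.sqrt_pos.2 pi_pos).ne'
  have h1 : Real.exp (-∑ j : Fin n₂, ∑ k : Fin (n₁ - 1),
      b j k * (xs j k - (if hk : k.val = 0 then x₁
         else xs j ⟨k.val - 1, by have := k.isLt; omega⟩) ^ 2) ^ 2)
      = Real.exp (∑ j : Fin n₂, ∑ k : Fin (n₁ - 1),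
        -(b j k * (xs j k - (if hk : k.val = 0 then x₁
         else xs j ⟨k.val - 1, by have := k.isLt; omega⟩) ^ 2) ^ 2)) := by
    congr 1; simp [Finset.sum_neg_distrib]
  have h2 : -a * (x₁ - μ) ^ 2 = -(a * (x₁ - μ) ^ 2) := by ring
  rw [h1, h2]
  field_simp
  ring
  rw [mul_assoc, ← mul_pow, mul_inv_cancel₀ hπ, one_pow, mul_one]
end

section
/- Let n₁ ≥ 2, n₂ ≥ 1, μ ∈ ℝ, a > 0, b_{j,i} > 0 for j = 1,…,n₂ and i = 2,…,n₁, and n = (n₁−1)n₂+1. Then the marginal of the first coordinate x₁ under the normalized Hybrid Rosenbrock density is the Gaussian density with mean μ and variance 1/(2a): for every x₁ ∈ ℝ, integrating the normalized Hybrid Rosenbrock density over all the remaining n−1 coordinates yields √(a/π) · exp(−a(x₁−μ)²). -/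
open MeasureTheory Real

/-- The chain (single-block) sum appearing in the Rosenbrock kernel. -/
noncomputable def chainSum (m : ℕ) (b : Fin m → ℝ) (c : ℝ) (y : Fin m → ℝ) : ℝ :=
  ∑ k : Fin m, b k * (y k -
      (if hk : k.val = 0 then c
       else y ⟨k.val - 1, by have := k.isLt; omega⟩) ^ 2) ^ 2

lemma chainSum_continuous (m : ℕ) (b : Fin m → ℝ) (c : ℝ) :
    Continuous (chainSum m b c) := by
  unfold chainSum
  apply continuous_finset_sum
  intro k _
  by_cases hk : k.val = 0
  · simp only [hk, dif_pos]; fun_prop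
  · simp only [dif_neg hk]; fun_prop

lemma lintegral_gauss {b : ℝ} (hb : 0 < b) (c : ℝ) :
    ∫⁻ x : ℝ, ENNReal.ofReal (Real.exp (-(b * (x - c) ^ 2)))
      = ENNReal.ofReal (Real.sqrt (π / b)) := by
  have hi : Integrable (fun x : ℝ => Real.exp (-(b * (x - c) ^ 2))) := by
    have := (integrable_exp_neg_mul_sq hb).comp_sub_right c
    simpa [neg_mul] using this
  rw [← ofReal_integral_eq_lintegral_ofReal hi
    (Filter.Eventually.of_forall fun x => (Real.exp_pos _).le)]
  congr 1
  have h : (fun x : ℝ => Real.exp (-(b * (x - c) ^ 2)))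
      = fun x => Real.exp (-b * (x - c) ^ 2) := by funext x; ring_nf
  rw [h, integral_sub_right_eq_self (fun x => Real.exp (-b * x ^ 2)) c]
  exact integral_gaussian b

lemma chainSum_snoc (m : ℕ) (b : Fin (m + 1) → ℝ) (c x : ℝ) (y : Fin m → ℝ) :
    chainSum (m + 1) b c (Fin.snoc y x) =
      chainSum m (fun k => b k.castSucc) c y +
        b (Fin.last m) * (x -
          (if hm : m = 0 then c else y ⟨m - 1, by omega⟩) ^ 2) ^ 2 := by
  unfold chainSum
  rw [Fin.sum_univ_castSucc]
  congr 1
  · refine Finset.sum_congr rfl fun k _ => ?_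
    have h1 : (Fin.snoc y x : Fin (m + 1) → ℝ) k.castSucc = y k := by simp
    by_cases hk : k.val = 0
    · simp only [Fin.coe_castSucc, hk, dif_pos, h1]
    · simp only [Fin.coe_castSucc, dif_neg hk, h1]
      rw [show (⟨(k : ℕ) - 1, by have := k.isLt; omega⟩ : Fin (m + 1))
          = Fin.castSucc ⟨(k : ℕ) - 1, by have := k.isLt; omega⟩ from rfl,
        Fin.snoc_castSucc]
  · have h3 : (Fin.snoc y x : Fin (m + 1) → ℝ) (Fin.last m) = x := by simp
    by_cases hm : m = 0
    · subst hm
      have h4 : (Fin.snoc y x : Fin 1 → ℝ) 0 = x := h3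
      simp [h4]
    · have hlt : (Fin.last m).val ≠ 0 := by simp [Fin.last, hm]
      have h4 : (⟨(Fin.last m).val - 1, by have := (Fin.last m).isLt; omega⟩ : Fin (m + 1))
          = Fin.castSucc ⟨m - 1, by omega⟩ := by
        simp [Fin.ext_iff, Fin.last]
      simp only [Fin.val_last, dif_neg hm, h3]
      rw [show (⟨m - 1, by omega⟩ : Fin (m + 1))
          = Fin.castSucc ⟨m - 1, by omega⟩ from rfl,
        Fin.snoc_castSucc]

lemma chain_lintegral (m : ℕ) (b : Fin m → ℝ) (hb : ∀ k, 0 < b k) (c : ℝ) :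
    ∫⁻ y : Fin m → ℝ, ENNReal.ofReal (Real.exp (-chainSum m b c y))
      = ∏ k : Fin m, ENNReal.ofReal (Real.sqrt (π / b k)) := by
  induction m generalizing c with
  | zero =>
      simp [chainSum, MeasureTheory.volume_pi, MeasureTheory.Measure.pi_empty_univ]
  | succ m ih =>
      have hmeas : Measurable fun y : Fin (m + 1) → ℝ =>
          ENNReal.ofReal (Real.exp (-chainSum (m + 1) b c y)) :=
        ENNReal.measurable_ofReal.comp
          ((Real.continuous_exp.comp (chainSum_continuous _ _ _).neg).measurable)
      rw [← ((volume_preserving_piFinSuccAbove (fun _ : Fin (m + 1) => ℝ)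
          (Fin.last m)).symm).lintegral_comp hmeas]
      have hsymm : ∀ p : ℝ × (Fin m → ℝ),
          (MeasurableEquiv.piFinSuccAbove (fun _ : Fin (m + 1) => ℝ) (Fin.last m)).symm p
            = Fin.snoc p.2 p.1 := by
        intro p
        simp [MeasurableEquiv.piFinSuccAbove_symm_apply, Fin.insertNthEquiv,
          Fin.insertNth_last']
      simp only [hsymm, chainSum_snoc, neg_add, Real.exp_add,
        ENNReal.ofReal_mul (Real.exp_pos _).le]
      rw [MeasureTheory.Measure.volume_eq_prod, MeasureTheory.lintegral_prod_symm]
      · have hinner : ∀ y : Fin m → ℝ,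
            (∫⁻ x : ℝ, ENNReal.ofReal (Real.exp (-chainSum m (fun k => b k.castSucc) c y)) *
              ENNReal.ofReal (Real.exp (-(b (Fin.last m) * (x -
                (if hm : m = 0 then c else y ⟨m - 1, by omega⟩) ^ 2) ^ 2))))
            = ENNReal.ofReal (Real.exp (-chainSum m (fun k => b k.castSucc) c y)) *
                ENNReal.ofReal (Real.sqrt (π / b (Fin.last m))) := by
          intro y
          rw [lintegral_const_mul _ (by
            exact ENNReal.measurable_ofReal.comp
              (Real.continuous_exp.measurable.comp (by fun_prop)))]
          rw [lintegral_gauss (hb _) _]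
        simp only [hinner]
        have hm2 : Measurable fun y : Fin m → ℝ =>
            ENNReal.ofReal (Real.exp (-chainSum m (fun k => b k.castSucc) c y)) := by
          exact (Real.measurable_exp.comp (chainSum_continuous _ _ _).neg.measurable).ennreal_ofReal
        rw [lintegral_mul_const _ hm2]
        rw [ih (fun k => b k.castSucc) (fun k => hb _) c, Fin.prod_univ_castSucc]
      · apply Measurable.aemeasurable
        apply Measurable.fun_mul
        · exact ENNReal.measurable_ofReal.comp
            ((Real.continuous_exp.comp
              ((chainSum_continuous _ _ _).comp (by fun_prop)).neg).measurable)
        · apply ENNReal.measurable_ofReal.comp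
          apply Real.continuous_exp.measurable.comp
          apply Measurable.fun_neg
          apply Measurable.fun_mul measurable_const
          apply Measurable.pow _ measurable_const
          apply Measurable.fun_sub measurable_fst
          by_cases hm : m = 0
          · simp only [hm, dif_pos]; fun_prop
          · simp only [dif_neg hm]; fun_prop

lemma chain_integral (m : ℕ) (b : Fin m → ℝ) (hb : ∀ k, 0 < b k) (c : ℝ) :
    ∫ y : Fin m → ℝ, Real.exp (-chainSum m b c y)
      = ∏ k : Fin m, Real.sqrt (π / b k) := by
  rw [integral_eq_lintegral_of_nonneg_ae (f := fun y => Real.exp (-chainSum m b c y))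
      (Filter.Eventually.of_forall fun y => (Real.exp_pos _).le)
      ((Real.continuous_exp.comp (chainSum_continuous _ _ _).neg).aestronglyMeasurable)]
  rw [chain_lintegral m b hb c]
  rw [← ENNReal.ofReal_prod_of_nonneg (fun k _ => Real.sqrt_nonneg _)]
  exact ENNReal.toReal_ofReal (Finset.prod_nonneg fun k _ => Real.sqrt_nonneg _)

/-- Integrating the normalized Hybrid Rosenbrock density over all coordinates other
than `x₁` yields the Gaussian density with mean `μ` and variance `1/(2a)`, namely
`√(a/π) exp (-a (x₁-μ)²)`. -/
theorem hybridRosenbrock_first_marginal (n₁ n₂ : ℕ)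
    (h₁ : 2 ≤ n₁) (h₂ : 1 ≤ n₂) (μ a : ℝ) (ha : 0 < a)
    (b : Fin n₂ → Fin (n₁ - 1) → ℝ) (hb : ∀ j k, 0 < b j k) (x₁ : ℝ) :
    (∫ xs : Fin n₂ → Fin (n₁ - 1) → ℝ,
        (Real.sqrt a * (∏ j : Fin n₂, ∏ k : Fin (n₁ - 1), Real.sqrt (b j k)) /
            π ^ ((((n₁ - 1) * n₂ + 1 : ℕ) : ℝ) / 2)) *
          hybridRosenbrockKernel n₁ n₂ μ a b x₁ xs)
      = Real.sqrt (a / π) * Real.exp (-a * (x₁ - μ) ^ 2) := by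
  have hker : ∀ xs : Fin n₂ → Fin (n₁ - 1) → ℝ,
      hybridRosenbrockKernel n₁ n₂ μ a b x₁ xs =
        Real.exp (-a * (x₁ - μ) ^ 2) *
          ∏ j : Fin n₂, Real.exp (-chainSum (n₁ - 1) (b j) x₁ (xs j)) := by
    intro xs
    unfold hybridRosenbrockKernel chainSum
    rw [sub_eq_add_neg, Real.exp_add, ← Finset.sum_neg_distrib, Real.exp_sum]
  simp only [hker]
  rw [MeasureTheory.integral_const_mul, MeasureTheory.integral_const_mul]
  rw [MeasureTheory.integral_fintype_prod_volume_eq_prod (ι := Fin n₂)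
    (fun j (y : Fin (n₁ - 1) → ℝ) => Real.exp (-chainSum (n₁ - 1) (b j) x₁ y))]
  have hch : ∀ j, (∫ y : Fin (n₁ - 1) → ℝ, Real.exp (-chainSum (n₁ - 1) (b j) x₁ y))
      = ∏ k : Fin (n₁ - 1), Real.sqrt (π / b j k) :=
    fun j => chain_integral _ _ (hb j) x₁
  simp only [hch]
  -- now pure arithmetic
  have hπ : (0:ℝ) < π := Real.pi_pos
  have key : (∏ j : Fin n₂, ∏ k : Fin (n₁ - 1), Real.sqrt (b j k)) *
      (∏ j : Fin n₂, ∏ k : Fin (n₁ - 1), Real.sqrt (π / b j k))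
      = Real.sqrt π ^ ((n₁ - 1) * n₂) := by
    rw [← Finset.prod_mul_distrib]
    have : ∀ j : Fin n₂, (∏ k : Fin (n₁ - 1), Real.sqrt (b j k)) *
        ∏ k : Fin (n₁ - 1), Real.sqrt (π / b j k) = Real.sqrt π ^ (n₁ - 1) := by
      intro j
      rw [← Finset.prod_mul_distrib]
      have : ∀ k : Fin (n₁ - 1), Real.sqrt (b j k) * Real.sqrt (π / b j k) = Real.sqrt π := by
        intro k
        rw [← Real.sqrt_mul (hb j k).le]
        congr 1
        rw [mul_comm]
        exact div_mul_cancel₀ π (hb j k).ne'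
      simp [this]
    simp [this, Finset.prod_const, ← pow_mul, mul_comm]
  have hpow : (π : ℝ) ^ ((((n₁ - 1) * n₂ + 1 : ℕ) : ℝ) / 2)
      = Real.sqrt π ^ ((n₁ - 1) * n₂ + 1) := by
    rw [← Real.rpow_natCast (Real.sqrt π), Real.sqrt_eq_rpow, ← Real.rpow_mul hπ.le]
    congr 1
    ring
  rw [hpow]
  set E := Real.exp (-a * (x₁ - μ) ^ 2) with hE
  set P := ∏ j : Fin n₂, ∏ k : Fin (n₁ - 1), Real.sqrt (b j k) with hP
  set Q := ∏ j : Fin n₂, ∏ k : Fin (n₁ - 1), Real.sqrt (π / b j k) with hQ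
  have hsqrtπ : (0:ℝ) < Real.sqrt π := Real.sqrt_pos.mpr hπ
  have hstep : Real.sqrt a * P / Real.sqrt π ^ ((n₁ - 1) * n₂ + 1) * (E * Q)
      = Real.sqrt a / Real.sqrt π * E * (P * Q / Real.sqrt π ^ ((n₁ - 1) * n₂)) := by
    rw [pow_succ]
    field_simp
  rw [hstep, key, div_self (by positivity), mul_one, Real.sqrt_div ha.le π]
end

section
/- For all a, b, c, d > 0, μ₁, μ₂ ∈ ℝ, the total integral of the 3-dimensional Full Rosenbrock kernel satisfies ∫_{ℝ³} exp(−a(x₁−μ₁)² − b(x₂−x₁²)² − c(x₂−μ₂)² − d(x₃−x₂²)²) dx = (π/√(d(b+c))) · ∫_ℝ exp(−a(x₁−μ₁)² − (bc/(b+c))(x₁²−μ₂)²) dx₁, and this integral is finite. -/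
open MeasureTheory Real

/-! Integrate out `x₃`, then `x₂`. For fixed `(x₁, x₂)` the kernel is a multiple of
`exp (-d (x₃ - x₂²)²)`; for fixed `x₁`, completing the square
`b (x₂ - x₁²)² + c (x₂ - μ₂)² = (b + c) (x₂ - m)² + bc/(b + c) (x₁² - μ₂)²`, with
`m = (b x₁² + c μ₂)/(b + c)`, makes it a multiple of `exp (-(b + c) (x₂ - m)²)`. A Gaussian
factor `exp (-d (y - φ x)²)` fibred over any base integrates, by Fubini–Tonelli, to `√(π/d)`
times the integral over the base. -/

lemma integrable_exp_neg_mul_sq_sub {b : ℝ} (hb : 0 < b) (m : ℝ) :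
    Integrable (fun x : ℝ => exp (-b * (x - m) ^ 2)) :=
  (integrable_exp_neg_mul_sq hb).comp_sub_right m

lemma integral_exp_neg_mul_sq_sub (b m : ℝ) :
    ∫ x : ℝ, exp (-b * (x - m) ^ 2) = √(π / b) := by
  rw [integral_sub_right_eq_self (fun x => exp (-b * x ^ 2)) m, integral_gaussian]

lemma mul_sq_sub_add_mul_sq_sub {p q : ℝ} (hpq : p + q ≠ 0) (y u v : ℝ) :
    p * (y - u) ^ 2 + q * (y - v) ^ 2
      = (p + q) * (y - (p * u + q * v) / (p + q)) ^ 2 + p * q / (p + q) * (u - v) ^ 2 := by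
  field_simp
  ring

lemma integrable_exp_neg_mul_sq_sub_sub {a : ℝ} (ha : 0 < a) (μ₀ : ℝ) {g : ℝ → ℝ}
    (hg : Continuous g) (hg0 : ∀ x, 0 ≤ g x) :
    Integrable (fun x : ℝ => exp (-a * (x - μ₀) ^ 2 - g x)) := by
  refine (integrable_exp_neg_mul_sq_sub ha μ₀).mono (by fun_prop) (.of_forall fun x => ?_)
  simp only [norm_of_nonneg (exp_pos _).le, exp_le_exp]
  linarith [hg0 x]

lemma exp_sub_mul_sq_sub (e d y m : ℝ) :
    exp (e - d * (y - m) ^ 2) = exp e * exp (-d * (y - m) ^ 2) := by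
  rw [← exp_add]; ring_nf

lemma integral_exp_sub_mul_sq_sub_right (e d m : ℝ) :
    ∫ y : ℝ, exp (e - d * (y - m) ^ 2) = exp e * √(π / d) := by
  simp only [exp_sub_mul_sq_sub, integral_const_mul, integral_exp_neg_mul_sq_sub]

lemma sqrt_div_mul_sqrt_div {x : ℝ} (hx : 0 ≤ x) {d : ℝ} (hd : 0 ≤ d) (s : ℝ) :
    √(x / d) * √(x / s) = x / √(d * s) := by
  rw [← sqrt_mul (div_nonneg hx hd), div_mul_div_comm, ← sq, sqrt_div (sq_nonneg x), sqrt_sq hx]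

section GaussianFibre

variable {α : Type*} [MeasurableSpace α] {μ : Measure α} {E φ : α → ℝ} {d : ℝ}

lemma integrable_exp_sub_mul_sq_sub (hE : Measurable E) (hφ : Measurable φ)
    (hint : Integrable (fun x => exp (E x)) μ) (hd : 0 < d) :
    Integrable (fun p : α × ℝ => exp (E p.1 - d * (p.2 - φ p.1) ^ 2)) (μ.prod volume) := by
  refine (integrable_prod_iff (by fun_prop)).2 ⟨.of_forall fun x => ?_, ?_⟩
  · simp only [exp_sub_mul_sq_sub]
    exact (integrable_exp_neg_mul_sq_sub hd (φ x)).const_mul _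
  · simp only [norm_of_nonneg (exp_pos _).le, integral_exp_sub_mul_sq_sub_right]
    exact hint.mul_const _

lemma integral_exp_sub_mul_sq_sub [SFinite μ] (hE : Measurable E) (hφ : Measurable φ)
    (hint : Integrable (fun x => exp (E x)) μ) (hd : 0 < d) :
    ∫ p : α × ℝ, exp (E p.1 - d * (p.2 - φ p.1) ^ 2) ∂(μ.prod volume)
      = √(π / d) * ∫ x, exp (E x) ∂μ := by
  simp only [integral_prod _ (integrable_exp_sub_mul_sq_sub hE hφ hint hd),
    integral_exp_sub_mul_sq_sub_right, integral_mul_const, mul_comm]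

end GaussianFibre

/-- The 3-d Full Rosenbrock kernel is integrable over `ℝ³`, and its total integral
equals `(π/√(d(b+c)))` times the one-dimensional integral
`∫ exp (-a (x₁-μ₁)² - (bc/(b+c)) (x₁²-μ₂)²) dx₁`. -/
theorem fullRosenbrock3d_total_integral (a b c d μ₁ μ₂ : ℝ)
    (ha : 0 < a) (hb : 0 < b) (hc : 0 < c) (hd : 0 < d) :
    Integrable (fun p : ℝ × ℝ × ℝ =>
        Real.exp (-a * (p.1 - μ₁) ^ 2 - b * (p.2.1 - p.1 ^ 2) ^ 2
          - c * (p.2.1 - μ₂) ^ 2 - d * (p.2.2 - p.2.1 ^ 2) ^ 2)) ∧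
      (∫ p : ℝ × ℝ × ℝ,
          Real.exp (-a * (p.1 - μ₁) ^ 2 - b * (p.2.1 - p.1 ^ 2) ^ 2
            - c * (p.2.1 - μ₂) ^ 2 - d * (p.2.2 - p.2.1 ^ 2) ^ 2))
        = (π / Real.sqrt (d * (b + c))) *
            ∫ x₁ : ℝ,
              Real.exp (-a * (x₁ - μ₁) ^ 2 - (b * c / (b + c)) * (x₁ ^ 2 - μ₂) ^ 2) := by
  have hs : 0 < b + c := add_pos hb hc
  set E₁ : ℝ → ℝ := fun x => -a * (x - μ₁) ^ 2 - b * c / (b + c) * (x ^ 2 - μ₂) ^ 2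
  set m : ℝ → ℝ := fun x => (b * x ^ 2 + c * μ₂) / (b + c)
  set E₂ : ℝ × ℝ → ℝ :=
    fun q => -a * (q.1 - μ₁) ^ 2 - b * (q.2 - q.1 ^ 2) ^ 2 - c * (q.2 - μ₂) ^ 2
  have hE₁ : Integrable fun x => exp (E₁ x) :=
    integrable_exp_neg_mul_sq_sub_sub ha μ₁ (by fun_prop) fun x => by positivity
  have hE₂_eq :
      (fun q => exp (E₂ q)) = fun q => exp (E₁ q.1 - (b + c) * (q.2 - m q.1) ^ 2) := by
    ext q
    have := mul_sq_sub_add_mul_sq_sub hs.ne' q.2 (q.1 ^ 2) μ₂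
    simp only [E₁, E₂, m]
    congr 1
    linarith
  have hE₂ : Integrable (fun q => exp (E₂ q)) (volume.prod volume) := by
    rw [hE₂_eq]
    exact integrable_exp_sub_mul_sq_sub (E := E₁) (φ := m) (by fun_prop) (by fun_prop) hE₁ hs
  have hE₂_int : ∫ q, exp (E₂ q) ∂(volume.prod volume) = √(π / (b + c)) * ∫ x, exp (E₁ x) := by
    rw [hE₂_eq]
    exact integral_exp_sub_mul_sq_sub (E := E₁) (φ := m) (by fun_prop) (by fun_prop) hE₁ hs
  have hassoc := volume_preserving_prodAssoc (α₁ := ℝ) (β₁ := ℝ) (γ₁ := ℝ)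
  constructor
  · rw [← hassoc.integrable_comp_emb MeasurableEquiv.prodAssoc.measurableEmbedding]
    exact integrable_exp_sub_mul_sq_sub (E := E₂) (φ := fun q => q.2 ^ 2) (by fun_prop)
      (by fun_prop) hE₂ hd
  · rw [← hassoc.integral_comp', ← sqrt_div_mul_sqrt_div pi_pos.le hd.le, mul_assoc, ← hE₂_int]
    exact integral_exp_sub_mul_sq_sub (E := E₂) (φ := fun q => q.2 ^ 2) (by fun_prop)
      (by fun_prop) hE₂ hd
end
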